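/- Kripke completeness of ℜ_d: for every formula φ₀ of 𝓛, if φ₀ is not a theorem of ℜ_d, then there exist a deterministic Kripke model ⟨W, →, ⊩⟩ and a world w ∈ W such that w ⊮ φ₀. -/
import Mathlib


/-- Formulas of the modal language 𝓛: propositional variables, ⊥, →, and ▷. -/
inductive Formula : Type
  | var : ℕ → Formula
  | bot : Formula
  | imp : Formula → Formula → Formula
  | tri : Formula → Formula → Formula
deriving DecidableEq

namespace Formula

/-- ¬φ := φ → ⊥ -/
def neg (φ : Formula) : Formula := imp φ bot
/-- ⊤ := ¬⊥ -/
def top : Formula := neg bot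
/-- φ ∨ ψ := ¬φ → ψ -/
def disj (φ ψ : Formula) : Formula := imp (neg φ) ψ
/-- φ ∧ ψ := ¬(φ → ¬ψ) -/
def conj (φ ψ : Formula) : Formula := neg (imp φ (neg ψ))

/-- `φ` is a substitution instance of a classical propositional tautology:
it evaluates to `true` under every boolean valuation of formulas that
respects `⊥` and `→` (variables and `▷`-formulas are treated as atoms). -/
def IsPropTaut (φ : Formula) : Prop :=
  ∀ v : Formula → Bool, v bot = false →
    (∀ a b, v (imp a b) = (!(v a) || v b)) → v φ = true

/-- Hilbert-style provability.  `Prv false` is the logic ℜ (axioms: classical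
tautologies, A1, A2, A3; rules: Modus Ponens and monotonicity M);
`Prv true` is the logic ℜ_d, which additionally has axiom A4. -/
inductive Prv : Bool → Formula → Prop
  | taut {d : Bool} {φ} : IsPropTaut φ → Prv d φ
  | a1 {d : Bool} (φ ψ χ) : Prv d (imp (tri φ ψ) (imp (tri χ ψ) (tri (disj φ χ) ψ)))
  | a2 {d : Bool} (φ) : Prv d (tri bot φ)
  | a3 {d : Bool} (φ) : Prv d (tri φ top)
  | a4 (φ ψ χ) : Prv true (imp (tri φ ψ) (imp (tri φ χ) (tri φ (conj ψ χ))))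
  | mp {d : Bool} {φ ψ} : Prv d (imp φ ψ) → Prv d φ → Prv d ψ
  | mono {d : Bool} {φ₁ φ₂ ψ₁ ψ₂} : Prv d (imp φ₁ φ₂) → Prv d (imp ψ₁ ψ₂) →
      Prv d (imp (tri φ₂ ψ₁) (tri φ₁ ψ₂))

/-- `Deriv d Δ φ`: φ is derivable from the hypotheses Δ together with all
theorems of the logic (`Prv d`) using only Modus Ponens. -/
inductive Deriv (d : Bool) (Δ : Set Formula) : Formula → Prop
  | hyp {φ} : φ ∈ Δ → Deriv d Δ φ
  | thm {φ} : Prv d φ → Deriv d Δ φ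
  | mp {φ ψ} : Deriv d Δ (imp φ ψ) → Deriv d Δ φ → Deriv d Δ ψ

/-- Conjunction of a list of formulas (empty conjunction is ⊤). -/
def conjList : List Formula → Formula
  | [] => top
  | φ :: l => conj φ (conjList l)

/-- ⋀Γ : conjunction of all formulas of a finite set Γ (⋀∅ = ⊤). -/
noncomputable def bigConj (Γ : Finset Formula) : Formula := conjList Γ.toList

/-- A set of formulas is consistent if ⊥ is not derivable from it. -/
def Consistent (d : Bool) (Δ : Set Formula) : Prop := ¬ Deriv d Δ bot

/-- The pair (u,v) is w-consistent: w ⊬ ⋀u ▷ ¬⋀v. -/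
def WCons (d : Bool) (w : Set Formula) (u v : Finset Formula) : Prop :=
  ¬ Deriv d w (tri (bigConj u) (neg (bigConj v)))

/-- The operation ∼: ∼(¬φ) = φ, and ∼φ = ¬φ if φ is not a negation. -/
def simNeg : Formula → Formula
  | imp φ bot => φ
  | φ => neg φ

/-- Φ is closed under subformulas. -/
def SubClosed (Φ : Finset Formula) : Prop :=
  (∀ a b, imp a b ∈ Φ → a ∈ Φ ∧ b ∈ Φ) ∧ (∀ a b, tri a b ∈ Φ → a ∈ Φ ∧ b ∈ Φ)

/-- Φ is closed under the operation ∼. -/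
def SimClosed (Φ : Finset Formula) : Prop := ∀ φ ∈ Φ, simNeg φ ∈ Φ

/-- w is a maximal consistent subset of Φ: w ⊆ Φ, w is consistent, and for
every φ ∈ Φ either φ ∈ w or ∼φ ∈ w. -/
def MaxCons (d : Bool) (Φ : Finset Formula) (w : Finset Formula) : Prop :=
  w ⊆ Φ ∧ Consistent d ↑w ∧ ∀ φ ∈ Φ, φ ∈ w ∨ simNeg φ ∈ w

/-- Kripke forcing: `rel w u v` means u →_w v, `val w p` means w ⊩ p. -/
def Forces {W : Type*} (rel : W → W → W → Prop) (val : W → ℕ → Prop) :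
    W → Formula → Prop
  | w, var p => val w p
  | _, bot => False
  | w, imp a b => Forces rel val w a → Forces rel val w b
  | w, tri a b => ∀ u v, rel w u v → Forces rel val u a →
      ∃ v', rel w u v' ∧ Forces rel val v' b

end Formula

/-- A Kripke model: a finite set of worlds, a ternary computability relation,
and a forcing relation between worlds and propositional variables. -/
structure KripkeModel where
  W : Type
  fin : Finite W
  rel : W → W → W → Prop
  val : W → ℕ → Prop

/-- A Kripke model is deterministic if for all worlds w, u there is at most
one v with u →_w v. -/
def KripkeModel.Deterministic (M : KripkeModel) : Prop :=
  ∀ w u v v', M.rel w u v → M.rel w u v' → v = v'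

/-- Forcing in a Kripke model. -/
def KripkeModel.Forces (M : KripkeModel) : M.W → Formula → Prop :=
  Formula.Forces M.rel M.val

/-- The standard enumeration of nondeterministic partial recursive functions:
ζ_w(u) = the set of possible outputs of machine (code) w on input u. -/
def zeta (w u : ℕ) : Set ℕ :=
  {v | ((Denumerable.ofNat Nat.Partrec.Code w).eval (Nat.pair u v)).Dom}

/-- The standard enumeration of deterministic partial recursive functions:
ξ_w(u) = the value of the partial recursive function with code w on input u. -/
def xi (w u : ℕ) : Part ℕ :=
  (Denumerable.ofNat Nat.Partrec.Code w).eval u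

namespace Formula

/-- Set semantics for nondeterministic partial recursive functions
(existential reading of ▷). -/
def semN (val : ℕ → Set ℕ) : Formula → Set ℕ
  | var p => val p
  | bot => ∅
  | imp a b => (Set.univ \ semN val a) ∪ semN val b
  | tri a b => {w | ∀ u ∈ semN val a, zeta w u ≠ ∅ → zeta w u ∩ semN val b ≠ ∅}

/-- Set semantics for deterministic partial recursive functions. -/
def semD (val : ℕ → Set ℕ) : Formula → Set ℕ
  | var p => val p
  | bot => ∅
  | imp a b => (Set.univ \ semD val a) ∪ semD val b
  | tri a b => {w | ∀ u ∈ semD val a, ∀ h : (xi w u).Dom, (xi w u).get h ∈ semD val b}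

/-- Universal set semantics for nondeterministic partial recursive functions:
every terminating computation path from φ* ends in ψ*. -/
def semU (val : ℕ → Set ℕ) : Formula → Set ℕ
  | var p => val p
  | bot => ∅
  | imp a b => (Set.univ \ semU val a) ∪ semU val b
  | tri a b => {w | ∀ u ∈ semU val a, zeta w u ⊆ semU val b}

/-- A canonical injective encoding of formulas as natural numbers. -/
def enc : Formula → ℕ
  | var n => 4 * n
  | bot => 1
  | imp a b => 4 * Nat.pair (enc a) (enc b) + 2
  | tri a b => 4 * Nat.pair (enc a) (enc b) + 3

end Formula

namespace Compl
open Formula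

/-- disjunction of a list -/
def disjList : List Formula → Formula
  | [] => bot
  | a :: l => disj a (disjList l)

section Bool
variable {v : Formula → Bool} (hb : v bot = false)
  (hi : ∀ a b, v (imp a b) = (!(v a) || v b))

include hb hi

lemma v_neg (a : Formula) : v (neg a) = !(v a) := by
  simp [Formula.neg, hi, hb]

lemma v_top : v Formula.top = true := by simp [Formula.top, v_neg hb hi, hb]

lemma v_conj (a b : Formula) : v (conj a b) = (v a && v b) := by
  simp [Formula.conj, v_neg hb hi, hi]

lemma v_disj (a b : Formula) : v (disj a b) = (v a || v b) := by
  simp [Formula.disj, v_neg hb hi, hi]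

lemma v_simNeg (a : Formula) : v (simNeg a) = !(v a) := by
  cases a with
  | imp x y =>
    cases y with
    | bot => simp [simNeg, hi, hb]
    | var n => simp [simNeg, v_neg hb hi]
    | imp _ _ => simp [simNeg, v_neg hb hi]
    | tri _ _ => simp [simNeg, v_neg hb hi]
  | var n => simp [simNeg, v_neg hb hi]
  | bot => simp [simNeg, v_neg hb hi]
  | tri _ _ => simp [simNeg, v_neg hb hi]

lemma v_conjList (l : List Formula) :
    v (conjList l) = true ↔ ∀ a ∈ l, v a = true := by
  induction l with
  | nil => simp [conjList, v_top hb hi]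
  | cons a l ih => simp [conjList, v_conj hb hi, ih]

lemma v_disjList (l : List Formula) :
    v (disjList l) = true ↔ ∃ a ∈ l, v a = true := by
  induction l with
  | nil => simp [disjList, hb]
  | cons a l ih => simp [disjList, v_disj hb hi, ih]

end Bool

end Compl
namespace Compl
open Formula

lemma prv_taut {d : Bool} {φ : Formula} (h : Formula.IsPropTaut φ) : Prv d φ := Prv.taut h

lemma prv_mp2 {d : Bool} {a b c : Formula} (h : Prv d (imp a (imp b c)))
    (h1 : Prv d a) (h2 : Prv d b) : Prv d c := (h.mp h1).mp h2

lemma deriv_mp2 {d : Bool} {Δ : Set Formula} {a b c : Formula}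
    (h : Deriv d Δ (imp a (imp b c))) (h1 : Deriv d Δ a) (h2 : Deriv d Δ b) :
    Deriv d Δ c := (h.mp h1).mp h2

/-- derivations are monotone in the hypothesis set -/
lemma deriv_mono {d : Bool} {Δ Δ' : Set Formula} {φ : Formula}
    (h : Deriv d Δ φ) (hs : Δ ⊆ Δ') : Deriv d Δ' φ := by
  induction h with
  | hyp h => exact Deriv.hyp (hs h)
  | thm h => exact Deriv.thm h
  | mp _ _ ih1 ih2 => exact Deriv.mp ih1 ih2

/-- deduction theorem -/
lemma deduction {d : Bool} {Δ : Set Formula} {φ ψ : Formula}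
    (h : Deriv d (insert φ Δ) ψ) : Deriv d Δ (imp φ ψ) := by
  induction h with
  | @hyp χ h =>
    rcases h with h | h
    · subst h
      refine Deriv.thm (prv_taut ?_)
      intro v hb hi; simp only [hi]; simp
    · refine Deriv.mp (Deriv.thm (prv_taut ?_)) (Deriv.hyp h)
      intro v hb hi; simp only [hi]
      cases v χ <;> cases v φ <;> simp
  | @thm χ h =>
    refine Deriv.mp (Deriv.thm (prv_taut ?_)) (Deriv.thm h)
    intro v hb hi; simp only [hi]
    cases v χ <;> cases v φ <;> simp
  | @mp a b _ _ ih1 ih2 =>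
    refine deriv_mp2 (Deriv.thm (prv_taut ?_)) ih1 ih2
    intro v hb hi; simp only [hi]
    cases v φ <;> cases v a <;> cases v b <;> simp

lemma deriv_empty {d : Bool} {φ : Formula} (h : Deriv d (∅ : Set Formula) φ) :
    Prv d φ := by
  induction h with
  | hyp h => exact absurd h (Set.notMem_empty _)
  | thm h => exact h
  | mp _ _ ih1 ih2 => exact ih1.mp ih2

/-- derivability from a list of hypotheses gives a provable implication -/
lemma deriv_list {d : Bool} {χ : Formula} :
    ∀ (l : List Formula), Deriv d {a | a ∈ l} χ → Prv d (imp (conjList l) χ)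
  | [], h => by
      have h0 : Prv d χ := deriv_empty (by simpa using h)
      refine (prv_taut ?_).mp h0
      intro v hb hi; simp only [hi]
      cases v χ <;> cases v (conjList []) <;> simp
  | a :: l, h => by
      have h' : Deriv d (insert a {x | x ∈ l}) χ :=
        deriv_mono h (by intro x hx; simpa using hx)
      have h2 := deriv_list l (deduction h')
      refine (prv_taut ?_).mp h2
      intro v hb hi
      simp only [hi, conjList, v_conj hb hi]
      cases v a <;> cases v (conjList l) <;> cases v χ <;> simp

lemma deriv_finset {d : Bool} {χ : Formula} (s : Finset Formula)
    (h : Deriv d ↑s χ) : Prv d (imp (conjList s.toList) χ) := by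
  apply deriv_list
  exact deriv_mono h (by intro x hx; simpa using hx)

lemma deriv_conjList {d : Bool} {Δ : Set Formula} (l : List Formula)
    (hl : ∀ a ∈ l, Deriv d Δ a) : Deriv d Δ (conjList l) := by
  induction l with
  | nil => exact Deriv.thm (prv_taut (fun v hb hi => v_top hb hi))
  | cons a l ih =>
    refine deriv_mp2 (Deriv.thm (prv_taut ?_)) (hl a (by simp))
      (ih (fun x hx => hl x (by simp [hx])))
    intro v hb hi; simp only [hi, conjList, v_conj hb hi]
    cases v a <;> cases v (conjList l) <;> simp

lemma finset_deriv {d : Bool} {s : Finset Formula} {χ : Formula}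
    (h : Prv d (imp (conjList s.toList) χ)) : Deriv d ↑s χ :=
  Deriv.mp (Deriv.thm h)
    (deriv_conjList _ (fun a ha => Deriv.hyp (by simpa using ha)))

end Compl
namespace Compl
open Formula

def sub : Formula → Finset Formula
  | var n => {var n}
  | bot => {bot}
  | imp a b => insert (imp a b) (sub a ∪ sub b)
  | tri a b => insert (tri a b) (sub a ∪ sub b)

lemma mem_sub_self (φ : Formula) : φ ∈ sub φ := by
  cases φ <;> simp [sub]

lemma sub_imp {a b χ : Formula} (h : imp a b ∈ sub χ) :
    a ∈ sub χ ∧ b ∈ sub χ := by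
  induction χ with
  | var n => simp [sub] at h
  | bot => simp [sub] at h
  | imp x y ihx ihy =>
    simp only [sub, Finset.mem_insert, Finset.mem_union] at h ⊢
    rcases h with h | h | h
    · cases h; exact ⟨Or.inr (Or.inl (mem_sub_self a)), Or.inr (Or.inr (mem_sub_self b))⟩
    · exact ⟨Or.inr (Or.inl (ihx h).1), Or.inr (Or.inl (ihx h).2)⟩
    · exact ⟨Or.inr (Or.inr (ihy h).1), Or.inr (Or.inr (ihy h).2)⟩
  | tri x y ihx ihy =>
    simp only [sub, Finset.mem_insert, Finset.mem_union] at h ⊢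
    rcases h with h | h | h
    · exact absurd h (by simp)
    · exact ⟨Or.inr (Or.inl (ihx h).1), Or.inr (Or.inl (ihx h).2)⟩
    · exact ⟨Or.inr (Or.inr (ihy h).1), Or.inr (Or.inr (ihy h).2)⟩

lemma sub_tri {a b χ : Formula} (h : tri a b ∈ sub χ) :
    a ∈ sub χ ∧ b ∈ sub χ := by
  induction χ with
  | var n => simp [sub] at h
  | bot => simp [sub] at h
  | imp x y ihx ihy =>
    simp only [sub, Finset.mem_insert, Finset.mem_union] at h ⊢
    rcases h with h | h | h
    · exact absurd h (by simp)
    · exact ⟨Or.inr (Or.inl (ihx h).1), Or.inr (Or.inl (ihx h).2)⟩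
    · exact ⟨Or.inr (Or.inr (ihy h).1), Or.inr (Or.inr (ihy h).2)⟩
  | tri x y ihx ihy =>
    simp only [sub, Finset.mem_insert, Finset.mem_union] at h ⊢
    rcases h with h | h | h
    · cases h; exact ⟨Or.inr (Or.inl (mem_sub_self a)), Or.inr (Or.inr (mem_sub_self b))⟩
    · exact ⟨Or.inr (Or.inl (ihx h).1), Or.inr (Or.inl (ihx h).2)⟩
    · exact ⟨Or.inr (Or.inr (ihy h).1), Or.inr (Or.inr (ihy h).2)⟩

lemma simNeg_cases (χ : Formula) :
    (∃ δ, χ = imp δ bot ∧ simNeg χ = δ) ∨ simNeg χ = imp χ bot := by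
  cases χ with
  | imp x y =>
    cases y with
    | bot => exact Or.inl ⟨x, rfl, rfl⟩
    | var n => exact Or.inr rfl
    | imp _ _ => exact Or.inr rfl
    | tri _ _ => exact Or.inr rfl
  | var n => exact Or.inr rfl
  | bot => exact Or.inr rfl
  | tri _ _ => exact Or.inr rfl

/-- the closure of φ₀ : subformulas, ⊥, ⊤, and their ∼'s -/
def sset (φ₀ : Formula) : Finset Formula :=
  insert bot (insert (imp bot bot) (sub φ₀))

def phiSet (φ₀ : Formula) : Finset Formula :=
  sset φ₀ ∪ (sset φ₀).image simNeg

lemma sset_imp {φ₀ a b : Formula} (h : imp a b ∈ sset φ₀) :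
    a ∈ sset φ₀ ∧ b ∈ sset φ₀ := by
  simp only [sset, Finset.mem_insert] at h ⊢
  rcases h with h | h | h
  · exact absurd h (by simp)
  · cases h; simp
  · exact ⟨Or.inr (Or.inr (sub_imp h).1), Or.inr (Or.inr (sub_imp h).2)⟩

lemma sset_tri {φ₀ a b : Formula} (h : tri a b ∈ sset φ₀) :
    a ∈ sset φ₀ ∧ b ∈ sset φ₀ := by
  simp only [sset, Finset.mem_insert] at h ⊢
  rcases h with h | h | h
  · exact absurd h (by simp)
  · exact absurd h (by simp)
  · exact ⟨Or.inr (Or.inr (sub_tri h).1), Or.inr (Or.inr (sub_tri h).2)⟩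

lemma sub_sset {φ₀ : Formula} : sset φ₀ ⊆ phiSet φ₀ :=
  Finset.subset_union_left

lemma phi_bot {φ₀ : Formula} : bot ∈ phiSet φ₀ := sub_sset (by simp [sset])

lemma phi_self {φ₀ : Formula} : φ₀ ∈ phiSet φ₀ :=
  sub_sset (by simp [sset, mem_sub_self])

lemma phi_imp {φ₀ a b : Formula} (h : imp a b ∈ phiSet φ₀) :
    a ∈ phiSet φ₀ ∧ b ∈ phiSet φ₀ := by
  simp only [phiSet, Finset.mem_union, Finset.mem_image] at h
  rcases h with h | ⟨χ, hχ, he⟩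
  · exact ⟨sub_sset (sset_imp h).1, sub_sset (sset_imp h).2⟩
  · rcases simNeg_cases χ with ⟨δ, hδ, hs⟩ | hs
    · subst hδ; rw [hs] at he; subst he
      have hd := (sset_imp hχ).1
      exact ⟨sub_sset (sset_imp hd).1, sub_sset (sset_imp hd).2⟩
    · rw [hs] at he
      cases he
      exact ⟨sub_sset hχ, phi_bot⟩

lemma phi_tri {φ₀ a b : Formula} (h : tri a b ∈ phiSet φ₀) :
    a ∈ phiSet φ₀ ∧ b ∈ phiSet φ₀ := by
  simp only [phiSet, Finset.mem_union, Finset.mem_image] at h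
  rcases h with h | ⟨χ, hχ, he⟩
  · exact ⟨sub_sset (sset_tri h).1, sub_sset (sset_tri h).2⟩
  · rcases simNeg_cases χ with ⟨δ, hδ, hs⟩ | hs
    · subst hδ; rw [hs] at he; subst he
      have hd := (sset_imp hχ).1
      exact ⟨sub_sset (sset_tri hd).1, sub_sset (sset_tri hd).2⟩
    · rw [hs] at he; cases he

lemma phi_sim {φ₀ χ : Formula} (h : χ ∈ phiSet φ₀) : simNeg χ ∈ phiSet φ₀ := by
  simp only [phiSet, Finset.mem_union, Finset.mem_image] at h ⊢
  rcases h with h | ⟨δ, hδ, he⟩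
  · exact Or.inr ⟨χ, h, rfl⟩
  · subst he
    rcases simNeg_cases δ with ⟨γ, hγ, hs⟩ | hs
    · subst hγ; rw [hs]
      exact Or.inr ⟨γ, (sset_imp hδ).1, rfl⟩
    · rw [hs]; exact Or.inl (by simpa [simNeg] using hδ)

lemma not_both {d : Bool} {y : Finset Formula} (hc : Consistent d ↑y)
    {χ : Formula} (h1 : χ ∈ y) (h2 : simNeg χ ∈ y) : False := by
  apply hc
  refine deriv_mp2 (Deriv.thm (prv_taut ?_)) (Deriv.hyp (by simpa using h1))
    (Deriv.hyp (by simpa using h2))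
  intro v hb hi
  simp only [hi, v_simNeg hb hi, hb]
  cases v χ <;> simp

lemma maxcons_mem {d : Bool} {Φ y : Finset Formula} (hm : MaxCons d Φ y)
    {χ : Formula} (hχ : χ ∈ Φ) (hd : Deriv d ↑y χ) : χ ∈ y := by
  rcases hm.2.2 χ hχ with h | h
  · exact h
  · exfalso
    apply hm.2.1
    refine deriv_mp2 (Deriv.thm (prv_taut ?_)) hd (Deriv.hyp (by simpa using h))
    intro v hb hi
    simp only [hi, v_simNeg hb hi, hb]
    cases v χ <;> simp

lemma lindenbaum_aux {d : Bool} (Φ : Finset Formula)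
    (hsim : ∀ χ ∈ Φ, simNeg χ ∈ Φ) :
    ∀ (L : List Formula), (∀ a ∈ L, a ∈ Φ) →
    ∀ z : Finset Formula, z ⊆ Φ → Consistent d ↑z →
      (∀ χ ∈ Φ, χ ∈ L ∨ χ ∈ z ∨ simNeg χ ∈ z) →
      ∃ y, z ⊆ y ∧ MaxCons d Φ y
  | [], _, z, hz, hc, hcomp =>
      ⟨z, subset_rfl, hz, hc, fun χ hχ => by
        rcases hcomp χ hχ with h | h
        · simp at h
        · exact h⟩
  | a :: L, hL, z, hz, hc, hcomp => by
      by_cases hca : Consistent d ↑(insert a z)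
      · obtain ⟨y, hy1, hy2⟩ := lindenbaum_aux Φ hsim L
          (fun x hx => hL x (by simp [hx]))
          (insert a z) (Finset.insert_subset (hL a (by simp)) hz) hca
          (fun χ hχ => by
            rcases hcomp χ hχ with h | h | h
            · rcases List.mem_cons.mp h with h | h
              · subst h; exact Or.inr (Or.inl (by simp))
              · exact Or.inl h
            · exact Or.inr (Or.inl (by simp [h]))
            · exact Or.inr (Or.inr (by simp [h])))
        exact ⟨y, fun x hx => hy1 (by simp [hx]), hy2⟩
      · have hca' : Deriv d ↑(insert a z) bot := not_not.mp hca
        have h1 : Deriv d ↑z (imp a bot) := by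
          apply deduction
          rw [Finset.coe_insert] at hca'
          exact hca'
        have hcb : Consistent d ↑(insert (simNeg a) z) := by
          intro hder
          rw [Finset.coe_insert] at hder
          have h2 : Deriv d ↑z (imp (simNeg a) bot) := deduction hder
          apply hc
          refine deriv_mp2 (Deriv.thm (prv_taut ?_)) h1 h2
          intro v hb hi
          simp only [hi, v_simNeg hb hi, hb]
          cases v a <;> simp
        obtain ⟨y, hy1, hy2⟩ := lindenbaum_aux Φ hsim L
          (fun x hx => hL x (by simp [hx]))
          (insert (simNeg a) z)
          (Finset.insert_subset (hsim a (hL a (by simp))) hz) hcb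
          (fun χ hχ => by
            rcases hcomp χ hχ with h | h | h
            · rcases List.mem_cons.mp h with h | h
              · subst h; exact Or.inr (Or.inr (by simp))
              · exact Or.inl h
            · exact Or.inr (Or.inl (by simp [h]))
            · exact Or.inr (Or.inr (by simp [h])))
        exact ⟨y, fun x hx => hy1 (by simp [hx]), hy2⟩

lemma lindenbaum {d : Bool} {Φ : Finset Formula}
    (hsim : ∀ χ ∈ Φ, simNeg χ ∈ Φ) {z : Finset Formula} (hz : z ⊆ Φ)
    (hc : Consistent d ↑z) : ∃ y, z ⊆ y ∧ MaxCons d Φ y :=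
  lindenbaum_aux Φ hsim Φ.toList (fun a ha => by simpa using ha) z hz hc
    (fun χ hχ => Or.inl (by simpa using hχ))

end Compl
namespace Compl
open Formula

attribute [local instance] Classical.propDecidable

lemma prv_imp_refl {d : Bool} (a : Formula) : Prv d (imp a a) :=
  prv_taut (by intro v hb hi; simp [hi])

lemma prv_imp_trans {d : Bool} {a b c : Formula} (h1 : Prv d (imp a b))
    (h2 : Prv d (imp b c)) : Prv d (imp a c) := by
  refine prv_mp2 (prv_taut ?_) h1 h2
  intro v hb hi; simp only [hi]
  cases v a <;> cases v b <;> cases v c <;> simp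

lemma prv_conj_mem {d : Bool} {a : Formula} {l : List Formula} (h : a ∈ l) :
    Prv d (imp (conjList l) a) := by
  refine prv_taut ?_
  intro v hb hi
  simp only [hi]
  rcases Bool.eq_false_or_eq_true (v (conjList l)) with hc | hc
  · simp [hc, (v_conjList hb hi l).mp hc a h]
  · simp [hc]

lemma prv_disj_mem {d : Bool} {a : Formula} {l : List Formula} (h : a ∈ l) :
    Prv d (imp a (disjList l)) := by
  refine prv_taut ?_
  intro v hb hi
  simp only [hi]
  rcases Bool.eq_false_or_eq_true (v a) with hc | hc
  · simp [hc, (v_disjList hb hi l).mpr ⟨a, h, hc⟩]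
  · simp [hc]

lemma v_imp_true {v : Formula → Bool} (hi : ∀ a b, v (imp a b) = (!(v a) || v b))
    {a b : Formula} : v (imp a b) = true ↔ (v a = true → v b = true) := by
  simp [hi]; cases v a <;> simp

lemma v_conjList_insert {v : Formula → Bool} (hb : v bot = false)
    (hi : ∀ a b, v (imp a b) = (!(v a) || v b)) (a : Formula) (z : Finset Formula) :
    v (conjList (insert a z).toList) = (v a && v (conjList z.toList)) := by
  rw [Bool.eq_iff_iff]
  simp only [Bool.and_eq_true, v_conjList hb hi, Finset.mem_toList, Finset.mem_insert]
  constructor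
  · intro h; exact ⟨h a (Or.inl rfl), fun x hx => h x (Or.inr hx)⟩
  · rintro ⟨h1, h2⟩ x (rfl | hx)
    · exact h1
    · exact h2 x hx

lemma v_disjList_append {v : Formula → Bool} (hb : v bot = false)
    (hi : ∀ a b, v (imp a b) = (!(v a) || v b)) (l₁ l₂ : List Formula) :
    v (disjList (l₁ ++ l₂)) = (v (disjList l₁) || v (disjList l₂)) := by
  induction l₁ with
  | nil => simp [disjList, hb]
  | cons a l ih => simp [disjList, v_disj hb hi, ih, Bool.or_assoc]

/-- from tri-derivations of each conjunct, derive tri of the conjunction -/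
lemma tri_conj {Δ : Set Formula} {α : Formula} (l : List Formula)
    (h : ∀ b ∈ l, Deriv true Δ (tri α b)) : Deriv true Δ (tri α (conjList l)) := by
  induction l with
  | nil => exact Deriv.thm (Prv.a3 α)
  | cons b l ih =>
    exact deriv_mp2 (Deriv.thm (Prv.a4 α b (conjList l))) (h b (by simp))
      (ih (fun x hx => h x (by simp [hx])))

/-- from tri-derivations of each disjunct, derive tri of the disjunction -/
lemma tri_disj {d : Bool} {Δ : Set Formula} {ψ : Formula} (l : List Formula)
    (h : ∀ a ∈ l, Deriv d Δ (tri a ψ)) : Deriv d Δ (tri (disjList l) ψ) := by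
  induction l with
  | nil => exact Deriv.thm (Prv.a2 ψ)
  | cons a l ih =>
    exact deriv_mp2 (Deriv.thm (Prv.a1 a ψ (disjList l))) (h a (by simp))
      (ih (fun x hx => h x (by simp [hx])))

lemma tri_mono {d : Bool} {Δ : Set Formula} {a a' b b' : Formula}
    (h1 : Prv d (imp a' a)) (h2 : Prv d (imp b b')) (h : Deriv d Δ (tri a b)) :
    Deriv d Δ (tri a' b') := Deriv.mp (Deriv.thm (Prv.mono h1 h2)) h

section Phi
variable (Φ : Finset Formula)

/-- triggered consequents -/
noncomputable def Dset (x y : Finset Formula) : Finset Formula :=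
  Φ.filter (fun ψ => ∃ φ, tri φ ψ ∈ x ∧ φ ∈ y)

lemma mem_Dset {x y : Finset Formula} {ψ : Formula} :
    ψ ∈ Dset Φ x y ↔ ψ ∈ Φ ∧ ∃ φ, tri φ ψ ∈ x ∧ φ ∈ y := by
  simp [Dset]

/-- steps A and B : x ⊢ ⋀y ▷ ψ whenever ⋀D(x,y) → ψ is provable -/
lemma tri_world {x y : Finset Formula} {ψ : Formula}
    (hψ : Prv true (imp (conjList (Dset Φ x y).toList) ψ)) :
    Deriv true ↑x (tri (conjList y.toList) ψ) := by
  refine tri_mono (prv_imp_refl _) hψ (tri_conj _ ?_)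
  intro b hb
  rw [Finset.mem_toList, mem_Dset] at hb
  obtain ⟨φ2, hφx, hφy⟩ := hb.2
  exact tri_mono (prv_conj_mem (Finset.mem_toList.mpr hφy)) (prv_imp_refl _)
    (Deriv.hyp (by simpa using hφx))

/-- all selections extending z by deciding each element of L -/
def sel : List Formula → Finset Formula → List (Finset Formula)
  | [], z => [z]
  | a :: L, z => sel L (insert a z) ++ sel L (insert (simNeg a) z)

lemma sel_cover {d : Bool} :
    ∀ (L : List Formula) (z : Finset Formula),
    Prv d (imp (conjList z.toList)
      (disjList ((sel L z).map (fun y => conjList y.toList))))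
  | [], z => by
      refine prv_taut ?_
      intro v hb hi
      simp only [sel, List.map, disjList, v_disj hb hi, hi, hb]
      cases v (conjList z.toList) <;> simp
  | a :: L, z => by
      have h1 := sel_cover (d := d) L (insert a z)
      have h2 := sel_cover (d := d) L (insert (simNeg a) z)
      refine prv_mp2 (prv_taut ?_) h1 h2
      intro v hb hi
      simp only [sel, List.map_append, hi, v_disjList_append hb hi,
        v_conjList_insert hb hi, v_simNeg hb hi]
      cases v a <;> cases v (conjList z.toList) <;>
        cases v (disjList ((sel L (insert a z)).map (fun y => conjList y.toList))) <;>
        cases v (disjList ((sel L (insert (simNeg a) z)).map (fun y => conjList y.toList))) <;>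
        simp

lemma sel_spec : ∀ (L : List Formula) (z y : Finset Formula), y ∈ sel L z →
    z ⊆ y ∧ (∀ χ ∈ y, χ ∈ z ∨ χ ∈ L ∨ ∃ a ∈ L, χ = simNeg a) ∧
      (∀ a ∈ L, a ∈ y ∨ simNeg a ∈ y)
  | [], z, y, hy => by
      simp only [sel, List.mem_singleton] at hy
      subst hy
      exact ⟨subset_rfl, fun χ hχ => Or.inl hχ, by simp⟩
  | a :: L, z, y, hy => by
      simp only [sel, List.mem_append] at hy
      rcases hy with hy | hy
      · obtain ⟨hs, hm, hc⟩ := sel_spec L (insert a z) y hy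
        refine ⟨fun x hx => hs (by simp [hx]), ?_, ?_⟩
        · intro χ hχ
          rcases hm χ hχ with h | h | ⟨b, hb, he⟩
          · rcases Finset.mem_insert.mp h with h | h
            · exact Or.inr (Or.inl (by simp [h]))
            · exact Or.inl h
          · exact Or.inr (Or.inl (by simp [h]))
          · exact Or.inr (Or.inr ⟨b, by simp [hb], he⟩)
        · intro b hb
          rcases List.mem_cons.mp hb with h | h
          · subst h; exact Or.inl (hs (by simp))
          · exact hc b h
      · obtain ⟨hs, hm, hc⟩ := sel_spec L (insert (simNeg a) z) y hy
        refine ⟨fun x hx => hs (by simp [hx]), ?_, ?_⟩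
        · intro χ hχ
          rcases hm χ hχ with h | h | ⟨b, hb, he⟩
          · rcases Finset.mem_insert.mp h with h | h
            · exact Or.inr (Or.inr ⟨a, by simp, h⟩)
            · exact Or.inl h
          · exact Or.inr (Or.inl (by simp [h]))
          · exact Or.inr (Or.inr ⟨b, by simp [hb], he⟩)
        · intro b hb
          rcases List.mem_cons.mp hb with h | h
          · subst h; exact Or.inr (hs (by simp))
          · exact hc b h

/-- the set of maximal consistent subsets of Φ containing φ -/
noncomputable def mcs (φ : Formula) : Finset (Finset Formula) :=
  Φ.powerset.filter (fun y => MaxCons true Φ y ∧ φ ∈ y)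

lemma disj_mono_or {d : Bool} : ∀ (l₁ : List Formula) (l₂ : List Formula),
    (∀ a ∈ l₁, Prv d (imp a bot) ∨ a ∈ l₂) →
    Prv d (imp (disjList l₁) (disjList l₂))
  | [], l₂, _ => prv_taut (by intro v hb hi; simp [disjList, hi, hb])
  | a :: l₁, l₂, h => by
      have ih := disj_mono_or l₁ l₂ (fun x hx => h x (by simp [hx]))
      rcases h a (by simp) with ha | ha
      · refine prv_mp2 (prv_taut ?_) ha ih
        intro v hb hi
        simp only [disjList, v_disj hb hi, hi, hb]
        cases v a <;> cases v (disjList l₁) <;> cases v (disjList l₂) <;> simp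
      · have ha' : Prv d (imp a (disjList l₂)) := prv_disj_mem ha
        refine prv_mp2 (prv_taut ?_) ha' ih
        intro v hb hi
        simp only [disjList, v_disj hb hi, hi]
        cases v a <;> cases v (disjList l₁) <;> cases v (disjList l₂) <;> simp

/-- covering lemma : φ provably implies the disjunction of all maximal
consistent subsets of Φ containing φ -/
lemma cover (hsim : ∀ χ ∈ Φ, simNeg χ ∈ Φ) {φ : Formula} (hφ : φ ∈ Φ) :
    Prv true (imp φ
      (disjList ((mcs Φ φ).toList.map (fun y => conjList y.toList)))) := by
  have h0 := sel_cover (d := true) Φ.toList ({φ} : Finset Formula)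
  have hφ1 : Prv true (imp φ (conjList ({φ} : Finset Formula).toList)) := by
    refine prv_taut ?_
    intro v hb hi
    rw [v_imp_true hi]
    intro hv
    rw [v_conjList hb hi]
    intro x hx
    simp only [Finset.mem_toList, Finset.mem_singleton] at hx
    subst hx; exact hv
  refine prv_imp_trans (prv_imp_trans hφ1 h0) (disj_mono_or _ _ ?_)
  intro b hb
  simp only [List.mem_map] at hb
  obtain ⟨y, hy, rfl⟩ := hb
  obtain ⟨hs, hm, hc⟩ := sel_spec Φ.toList {φ} y hy
  have hyΦ : y ⊆ Φ := by
    intro χ hχ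
    rcases hm χ hχ with h | h | ⟨a, ha, he⟩
    · simp only [Finset.mem_singleton] at h; subst h; exact hφ
    · simpa using h
    · subst he; exact hsim a (by simpa using ha)
  by_cases hcons : Consistent true ↑y
  · refine Or.inr ?_
    simp only [List.mem_map]
    refine ⟨y, ?_, rfl⟩
    rw [Finset.mem_toList, mcs, Finset.mem_filter, Finset.mem_powerset]
    exact ⟨hyΦ, ⟨hyΦ, hcons, fun χ hχ => hc χ (by simpa using hχ)⟩,
      hs (by simp)⟩
  · exact Or.inl (deriv_finset y (not_not.mp hcons))

/-- the existence lemma : if ¬(φ▷ψ) holds at the maximal consistent x, there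
is a maximal consistent y containing φ whose triggered consequents together
with ∼ψ are consistent -/
lemma existence (hsim : ∀ χ ∈ Φ, simNeg χ ∈ Φ)
    (htri : ∀ a b, tri a b ∈ Φ → a ∈ Φ ∧ b ∈ Φ)
    {x : Finset Formula} (hx : MaxCons true Φ x) {φ ψ : Formula}
    (hmem : tri φ ψ ∈ Φ) (hnx : tri φ ψ ∉ x) :
    ∃ y, MaxCons true Φ y ∧ φ ∈ y ∧
      Consistent true ↑(insert (simNeg ψ) (Dset Φ x y)) := by
  by_contra hcon
  push_neg at hcon
  have key : ∀ y ∈ mcs Φ φ,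
      Prv true (imp (conjList (Dset Φ x y).toList) ψ) := by
    intro y hy
    rw [mcs, Finset.mem_filter] at hy
    have hder : Deriv true ↑(insert (simNeg ψ) (Dset Φ x y)) bot :=
      not_not.mp (hcon y hy.2.1 hy.2.2)
    have h1 := deriv_finset _ hder
    refine (prv_taut ?_).mp h1
    intro v hb hi
    rw [v_imp_true hi]
    intro hv
    rw [v_imp_true hi] at hv ⊢
    intro hC
    rcases Bool.eq_false_or_eq_true (v ψ) with hψv1 | hψv
    · exact hψv1
    · exfalso
      have : v (conjList (insert (simNeg ψ) (Dset Φ x y)).toList) = true := by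
        rw [v_conjList_insert hb hi, v_simNeg hb hi, hψv, hC]; rfl
      have := hv this
      rw [hb] at this; exact Bool.false_ne_true this
  have hstep : Deriv true ↑x (tri φ ψ) := by
    refine tri_mono (cover Φ hsim (htri φ ψ hmem).1) (prv_imp_refl ψ) ?_
    refine tri_disj _ ?_
    intro a ha
    simp only [List.mem_map] at ha
    obtain ⟨y, hy, rfl⟩ := ha
    exact tri_world Φ (key y (by simpa using hy))
  exact hnx (maxcons_mem hx hmem hstep)

end Phi
end Compl
namespace Compl
open Formula

variable (φ₀ : Formula)

/-- worlds : pairs of a subset of Φ and a tag in Φ -/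
def Wt : Type :=
  {y : Finset Formula // y ∈ (phiSet φ₀).powerset} × {t : Formula // t ∈ phiSet φ₀}

instance : Finite (Wt φ₀) := by unfold Wt; infer_instance

def Good (w u v : Wt φ₀) : Prop :=
  MaxCons true (phiSet φ₀) w.1.1 ∧ MaxCons true (phiSet φ₀) u.1.1 ∧
  MaxCons true (phiSet φ₀) v.1.1 ∧
  Dset (phiSet φ₀) w.1.1 u.1.1 ⊆ v.1.1 ∧
  (∀ a b, u.2.1 = tri a b → tri a b ∉ w.1.1 → a ∈ u.1.1 → simNeg b ∈ v.1.1)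

noncomputable def rel (w u v : Wt φ₀) : Prop :=
  ∃ h : (∃ v', Good φ₀ w u v'), v = h.choose

lemma rel_det {w u v v' : Wt φ₀} (h1 : rel φ₀ w u v) (h2 : rel φ₀ w u v') :
    v = v' := by
  obtain ⟨a, ha⟩ := h1
  obtain ⟨b, hb⟩ := h2
  rw [ha, hb]

lemma rel_good {w u v : Wt φ₀} (h : rel φ₀ w u v) : Good φ₀ w u v := by
  obtain ⟨a, ha⟩ := h
  rw [ha]
  exact a.choose_spec

lemma rel_of_good {w u v : Wt φ₀} (h : Good φ₀ w u v) :
    rel φ₀ w u (Exists.choose ⟨v, h⟩ : Wt φ₀) := ⟨⟨v, h⟩, rfl⟩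

def val (w : Wt φ₀) (p : ℕ) : Prop := var p ∈ w.1.1

lemma truth : ∀ (χ : Formula), χ ∈ phiSet φ₀ → ∀ w : Wt φ₀,
    MaxCons true (phiSet φ₀) w.1.1 →
    (Formula.Forces (rel φ₀) (val φ₀) w χ ↔ χ ∈ w.1.1) := by
  intro χ
  induction χ with
  | var p =>
    intro _ w _
    simp [Formula.Forces, val]
  | bot =>
    intro _ w hw
    simp only [Formula.Forces]
    constructor
    · intro hf; exact hf.elim
    · intro hb
      exact (hw.2.1 (Deriv.hyp (by simpa using hb))).elim
  | imp a b iha ihb =>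
    intro hχ w hw
    obtain ⟨ha, hb⟩ := phi_imp hχ
    simp only [Formula.Forces]
    rw [iha ha w hw, ihb hb w hw]
    constructor
    · intro him
      rcases hw.2.2 (imp a b) hχ with h | h
      · exact h
      · exfalso
        rcases simNeg_cases (imp a b) with ⟨δ, hδ, hs⟩ | hs
        · -- b = bot, simNeg (imp a b) = a
          injection hδ with e1 e2
          subst e1
          rw [hs] at h
          have hbw := him h
          rw [e2] at hbw
          exact hw.2.1 (Deriv.hyp (by simpa using hbw))
        · rw [hs] at h
          have haw : a ∈ w.1.1 := by
            refine maxcons_mem hw ha ?_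
            refine Deriv.mp (Deriv.thm (prv_taut ?_)) (Deriv.hyp (by simpa using h))
            intro v hb' hi
            simp only [hi, hb']
            cases v a <;> cases v b <;> simp
          have hbw := him haw
          apply hw.2.1
          refine deriv_mp2 (Deriv.thm (prv_taut ?_)) (Deriv.hyp (by simpa using hbw))
            (Deriv.hyp (by simpa using h))
          intro v hb' hi
          simp only [hi, hb']
          cases v a <;> cases v b <;> simp
    · intro him haw
      refine maxcons_mem hw hb (Deriv.mp (Deriv.hyp (by simpa using him))
        (Deriv.hyp (by simpa using haw)))
  | tri a b iha ihb =>
    intro hχ w hw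
    obtain ⟨ha, hb⟩ := phi_tri hχ
    simp only [Formula.Forces]
    constructor
    · intro hf
      by_contra hnx
      obtain ⟨y, hymax, hyφ, hycons⟩ :=
        existence (phiSet φ₀) (fun χ h => phi_sim h) (fun a b h => phi_tri h)
          hw hχ hnx
      -- build the worlds u and v
      have hyΦ : y ∈ (phiSet φ₀).powerset := Finset.mem_powerset.mpr hymax.1
      set u : Wt φ₀ := (⟨y, hyΦ⟩, ⟨tri a b, hχ⟩) with hu
      have hzΦ : insert (simNeg b) (Dset (phiSet φ₀) w.1.1 y) ⊆ phiSet φ₀ := by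
        refine Finset.insert_subset (phi_sim hb) ?_
        intro x hx
        exact (mem_Dset _ |>.mp hx).1
      obtain ⟨vy, hv1, hv2⟩ := lindenbaum (fun χ h => phi_sim h) hzΦ hycons
      have hvyΦ : vy ∈ (phiSet φ₀).powerset := Finset.mem_powerset.mpr hv2.1
      set v0 : Wt φ₀ := (⟨vy, hvyΦ⟩, ⟨bot, phi_bot⟩) with hv0
      have hgood : Good φ₀ w u v0 := by
        refine ⟨hw, hymax, hv2, ?_, ?_⟩
        · intro x hx
          exact hv1 (Finset.mem_insert_of_mem hx)
        · intro a' b' heq hnx' ha'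
          injection heq with e1 e2
          subst e1; subst e2
          exact hv1 (Finset.mem_insert_self _ _)
      have hrel := rel_of_good φ₀ hgood
      have hfa : Formula.Forces (rel φ₀) (val φ₀) u a :=
        (iha ha u hymax).mpr hyφ
      obtain ⟨v', hrel', hfb⟩ := hf u _ hrel hfa
      have hgood' := rel_good φ₀ hrel'
      have hsim' : simNeg b ∈ v'.1.1 := hgood'.2.2.2.2 a b rfl hnx hyφ
      have hbv : b ∈ v'.1.1 := (ihb hb v' hgood'.2.2.1).mp hfb
      exact not_both hgood'.2.2.1.2.1 hbv hsim'
    · intro hm u v hrel hfa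
      have hgood := rel_good φ₀ hrel
      have hau : a ∈ u.1.1 := (iha ha u hgood.2.1).mp hfa
      have hbv : b ∈ v.1.1 := hgood.2.2.2.1 ((mem_Dset _).mpr ⟨hb, a, hm, hau⟩)
      exact ⟨v, hrel, (ihb hb v hgood.2.2.1).mpr hbv⟩

end Compl
/-- Kripke completeness of ℜ_d: if φ₀ is not a theorem of ℜ_d, then some world
of some deterministic (finite) Kripke model does not force φ₀. -/
theorem kripke_completeness_Rd (φ₀ : Formula) (h : ¬ Formula.Prv true φ₀) :
    ∃ (M : KripkeModel), M.Deterministic ∧ ∃ w : M.W, ¬ M.Forces w φ₀ := by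
  classical
  open Formula Compl in
  -- {∼φ₀} is consistent
  have hc : Consistent true ↑({simNeg φ₀} : Finset Formula) := by
    intro hder
    apply h
    have h1 : Deriv true (insert (simNeg φ₀) (∅ : Set Formula)) bot := by
      refine deriv_mono hder ?_
      intro x hx
      simp at hx
      simp [hx]
    have h2 : Prv true (imp (simNeg φ₀) bot) := deriv_empty (deduction h1)
    refine (prv_taut ?_).mp h2
    intro v hb hi
    simp only [hi, v_simNeg hb hi, hb]
    cases v φ₀ <;> simp
  have hsub : ({simNeg φ₀} : Finset Formula) ⊆ phiSet φ₀ := by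
    simp [Finset.singleton_subset_iff, phi_sim phi_self]
  obtain ⟨ws, hws1, hws2⟩ := lindenbaum (fun χ hχ => phi_sim hχ) hsub hc
  refine ⟨⟨Wt φ₀, inferInstance, rel φ₀, val φ₀⟩, ?_, ?_⟩
  · intro w u v v' h1 h2
    exact rel_det φ₀ h1 h2
  · refine ⟨(⟨ws, Finset.mem_powerset.mpr hws2.1⟩, ⟨bot, phi_bot⟩), ?_⟩
    intro hf
    have := (truth φ₀ φ₀ phi_self _ hws2).mp hf
    exact not_both hws2.2.1 this (hws1 (by simp))
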